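/- Let v be any real-valued C² function of (α,β) on a region where sin β ≠ 0. Then ∂²v/∂ιₗ² = −ι·(∂v/∂ιₗ) − (1/sin²β)·(∂²v/∂α²) − (∂²v/∂β²) − cot β·(∂v/∂β), where ∂²v/∂ιₗ² denotes the operator ∂/∂ιₗ applied twice to v and ι = ι(α,β). -/

import Mathlib

/-!
Write `A = ι_α⁻¹` and `B = ι_β⁻¹`, so that `∂v/∂ιₗ = A v_α + B v_β` for real `v`. By the Leibniz
rule and `v_αβ = v_βα`,
`∂²v/∂ιₗ² = (∂A/∂ιₗ) v_α + (∂B/∂ιₗ) v_β + A² v_αα + B² v_ββ + (AB + BA) v_αβ`.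
Since `A = -ι_α / sin²β` and `B = -ι_β` are orthogonal pure imaginary quaternions of norms
`1 / |sin β|` and `1`, we get `A² = -1 / sin²β`, `B² = -1` and `AB + BA = 0`; a direct computation
gives `∂A/∂ιₗ = -ι A` and `∂B/∂ιₗ = -ι B - cot β`.
-/

open Quaternion

noncomputable section

/-- `ι(α,β) = cos α sin β · i + sin α sin β · j + cos β · k`, a unit imaginary quaternion. -/
def iota (α β : ℝ) : ℍ[ℝ] :=
  ⟨0, Real.cos α * Real.sin β, Real.sin α * Real.sin β, Real.cos β⟩
/-- `ι_α = ∂ι/∂α`. -/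
def iotaA (α β : ℝ) : ℍ[ℝ] := deriv (fun a => iota a β) α
/-- `ι_β = ∂ι/∂β`. -/
def iotaB (α β : ℝ) : ℍ[ℝ] := deriv (fun b => iota α b) β

/-- Partial derivative in `α` of a quaternion-valued function of `(α,β)`. -/
def pA (g : ℝ → ℝ → ℍ[ℝ]) (α β : ℝ) : ℍ[ℝ] := deriv (fun a => g a β) α
/-- Partial derivative in `β` of a quaternion-valued function of `(α,β)`. -/
def pB (g : ℝ → ℝ → ℍ[ℝ]) (α β : ℝ) : ℍ[ℝ] := deriv (fun b => g α b) β
/-- The left angular derivative `∂g/∂ιₗ := ι_α⁻¹ (∂g/∂α) + ι_β⁻¹ (∂g/∂β)`. -/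
def DI (g : ℝ → ℝ → ℍ[ℝ]) (α β : ℝ) : ℍ[ℝ] :=
  (iotaA α β)⁻¹ * pA g α β + (iotaB α β)⁻¹ * pB g α β

open Real

/-- The quaternion `a + b i + c j + d k`. Unlike the anonymous constructor, which produces a
`QuaternionAlgebra ℝ (-1) 0 (-1)`, this is typed as `ℍ[ℝ]`, so the `Quaternion` simp set applies. -/
def quat (a b c d : ℝ) : ℍ[ℝ] := ⟨a, b, c, d⟩

@[simp] theorem quat_re (a b c d : ℝ) : (quat a b c d).re = a := rfl
@[simp] theorem quat_imI (a b c d : ℝ) : (quat a b c d).imI = b := rfl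
@[simp] theorem quat_imJ (a b c d : ℝ) : (quat a b c d).imJ = c := rfl
@[simp] theorem quat_imK (a b c d : ℝ) : (quat a b c d).imK = d := rfl

theorem hasDerivAt_quat {f₀ f₁ f₂ f₃ : ℝ → ℝ} {f₀' f₁' f₂' f₃' t : ℝ}
    (h₀ : HasDerivAt f₀ f₀' t) (h₁ : HasDerivAt f₁ f₁' t)
    (h₂ : HasDerivAt f₂ f₂' t) (h₃ : HasDerivAt f₃ f₃' t) :
    HasDerivAt (fun s => quat (f₀ s) (f₁ s) (f₂ s) (f₃ s)) (quat f₀' f₁' f₂' f₃') t := by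
  have hf : (fun s => quat (f₀ s) (f₁ s) (f₂ s) (f₃ s)) = fun s =>
      f₀ s • quat 1 0 0 0 + f₁ s • quat 0 1 0 0 + f₂ s • quat 0 0 1 0 + f₃ s • quat 0 0 0 1 := by
    funext s; ext <;> simp
  have hf' : quat f₀' f₁' f₂' f₃' =
      f₀' • quat 1 0 0 0 + f₁' • quat 0 1 0 0 + f₂' • quat 0 0 1 0 + f₃' • quat 0 0 0 1 := by
    ext <;> simp
  rw [hf, hf']
  exact (((h₀.smul_const _).add (h₁.smul_const _)).add (h₂.smul_const _)).add (h₃.smul_const _)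

theorem HasDerivAt.quaternion_ofReal {f : ℝ → ℝ} {f' t : ℝ} (h : HasDerivAt f f' t) :
    HasDerivAt (fun s => (f s : ℍ[ℝ])) (f' : ℍ[ℝ]) t :=
  hasDerivAt_quat h (hasDerivAt_const t 0) (hasDerivAt_const t 0) (hasDerivAt_const t 0)

theorem Quaternion.deriv_ofReal_comp (f : ℝ → ℝ) (t : ℝ) :
    deriv (fun s => (f s : ℍ[ℝ])) t = ((deriv f t : ℝ) : ℍ[ℝ]) := by
  by_cases hf : DifferentiableAt ℝ f t
  · exact hf.hasDerivAt.quaternion_ofReal.deriv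
  · have : ¬ DifferentiableAt ℝ (fun s => (f s : ℍ[ℝ])) t := fun h => hf <| by
      exact (QuaternionAlgebra.reₗ ..).toContinuousLinearMap.differentiableAt.comp t h
    rw [deriv_zero_of_not_differentiableAt hf, deriv_zero_of_not_differentiableAt this,
      Quaternion.coe_zero]

theorem Quaternion.coe_eq_quat (r : ℝ) : (r : ℍ[ℝ]) = quat r 0 0 0 := rfl

section PartialDerivatives

variable {E : Type*} [NormedAddCommGroup E] [NormedSpace ℝ E]

def partialFst (v : ℝ → ℝ → E) (a b : ℝ) : E := deriv (fun t => v t b) a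

def partialSnd (v : ℝ → ℝ → E) (a b : ℝ) : E := deriv (fun t => v a t) b

theorem HasFDerivAt.hasDerivAt_fst_slice {f : ℝ × ℝ → E} {f' : ℝ × ℝ →L[ℝ] E} {a b : ℝ}
    (h : HasFDerivAt f f' (a, b)) : HasDerivAt (fun t => f (t, b)) (f' (1, 0)) a :=
  h.comp_hasDerivAt a ((hasDerivAt_id a).prodMk (hasDerivAt_const a b))

theorem HasFDerivAt.hasDerivAt_snd_slice {f : ℝ × ℝ → E} {f' : ℝ × ℝ →L[ℝ] E} {a b : ℝ}
    (h : HasFDerivAt f f' (a, b)) : HasDerivAt (fun t => f (a, t)) (f' (0, 1)) b :=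
  h.comp_hasDerivAt b ((hasDerivAt_const b a).prodMk (hasDerivAt_id b))

theorem ContDiffAt.hasFDerivAt_fderiv_apply {F : Type*} [NormedAddCommGroup F]
    [NormedSpace ℝ F] {f : F → E} {x : F} (hf : ContDiffAt ℝ 2 f x) (w : F) :
    HasFDerivAt (fun y => fderiv ℝ f y w)
      ((ContinuousLinearMap.apply ℝ E w).comp (fderiv ℝ (fderiv ℝ f) x)) x :=
  (ContinuousLinearMap.apply ℝ E w).hasFDerivAt.comp x
    ((hf.fderiv_right (m := 1) le_rfl).differentiableAt one_ne_zero).hasFDerivAt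

variable {v : ℝ → ℝ → E} {x : ℝ × ℝ}

theorem ContDiffAt.hasFDerivAt_partialFst (hv : ContDiffAt ℝ 2 (Function.uncurry v) x) :
    HasFDerivAt (fun y : ℝ × ℝ => partialFst v y.1 y.2)
      ((ContinuousLinearMap.apply ℝ E ((1 : ℝ), (0 : ℝ))).comp
        (fderiv ℝ (fderiv ℝ (Function.uncurry v)) x)) x := by
  refine (hv.hasFDerivAt_fderiv_apply _).congr_of_eventuallyEq ?_
  filter_upwards [hv.eventually (by simp)] with y hy
  exact (hy.differentiableAt two_ne_zero).hasFDerivAt.hasDerivAt_fst_slice.deriv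

theorem ContDiffAt.hasFDerivAt_partialSnd (hv : ContDiffAt ℝ 2 (Function.uncurry v) x) :
    HasFDerivAt (fun y : ℝ × ℝ => partialSnd v y.1 y.2)
      ((ContinuousLinearMap.apply ℝ E ((0 : ℝ), (1 : ℝ))).comp
        (fderiv ℝ (fderiv ℝ (Function.uncurry v)) x)) x := by
  refine (hv.hasFDerivAt_fderiv_apply _).congr_of_eventuallyEq ?_
  filter_upwards [hv.eventually (by simp)] with y hy
  exact (hy.differentiableAt two_ne_zero).hasFDerivAt.hasDerivAt_snd_slice.deriv

theorem ContDiffAt.partialSnd_partialFst (hv : ContDiffAt ℝ 2 (Function.uncurry v) x) :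
    partialSnd (partialFst v) x.1 x.2 = partialFst (partialSnd v) x.1 x.2 := by
  rw [partialSnd, partialFst, hv.hasFDerivAt_partialFst.hasDerivAt_snd_slice.deriv,
    hv.hasFDerivAt_partialSnd.hasDerivAt_fst_slice.deriv]
  exact (hv.isSymmSndFDerivAt (by simp)) _ _

end PartialDerivatives

theorem iota_eq (α β : ℝ) : iota α β = quat 0 (cos α * sin β) (sin α * sin β) (cos β) := rfl

theorem hasDerivAt_iota_fst (α β : ℝ) :
    HasDerivAt (fun a => iota a β) (quat 0 (-(sin α * sin β)) (cos α * sin β) 0) α :=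
  hasDerivAt_quat (hasDerivAt_const α 0) (by simpa using (hasDerivAt_cos α).mul_const (sin β))
    ((hasDerivAt_sin α).mul_const (sin β)) (hasDerivAt_const α (cos β))

theorem hasDerivAt_iota_snd (α β : ℝ) :
    HasDerivAt (fun b => iota α b) (quat 0 (cos α * cos β) (sin α * cos β) (-sin β)) β :=
  hasDerivAt_quat (hasDerivAt_const β 0) ((hasDerivAt_sin β).const_mul (cos α))
    ((hasDerivAt_sin β).const_mul (sin α)) (hasDerivAt_cos β)

theorem iotaA_eq (α β : ℝ) : iotaA α β = quat 0 (-(sin α * sin β)) (cos α * sin β) 0 :=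
  (hasDerivAt_iota_fst α β).deriv

theorem iotaB_eq (α β : ℝ) : iotaB α β = quat 0 (cos α * cos β) (sin α * cos β) (-sin β) :=
  (hasDerivAt_iota_snd α β).deriv

theorem iotaA_inv_eq (α β : ℝ) :
    (iotaA α β)⁻¹ = quat 0 (sin α / sin β) (-(cos α / sin β)) 0 := by
  rw [iotaA_eq]
  by_cases hβ : sin β = 0
  · simp only [hβ, mul_zero, neg_zero, div_zero]
    exact inv_zero
  refine inv_eq_of_mul_eq_one_right ?_
  ext <;> simp <;> field_simp
  · exact sin_sq_add_cos_sq α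
  · ring

theorem iotaB_inv_eq (α β : ℝ) :
    (iotaB α β)⁻¹ = quat 0 (-(cos α * cos β)) (-(sin α * cos β)) (sin β) := by
  rw [iotaB_eq]
  refine inv_eq_of_mul_eq_one_right ?_
  ext <;> simp
  · linear_combination cos β ^ 2 * sin_sq_add_cos_sq α + sin_sq_add_cos_sq β
  all_goals ring

theorem hasDerivAt_iotaA_inv_fst (α β : ℝ) :
    HasDerivAt (fun a => (iotaA a β)⁻¹) (quat 0 (cos α / sin β) (sin α / sin β) 0) α := by
  simp only [iotaA_inv_eq]
  refine (hasDerivAt_quat (hasDerivAt_const α 0) ((hasDerivAt_sin α).div_const (sin β))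
    ((hasDerivAt_cos α).div_const (sin β)).fun_neg (hasDerivAt_const α 0)).congr_deriv ?_
  ext <;> simp [neg_div]

theorem hasDerivAt_iotaA_inv_snd (α : ℝ) {β : ℝ} (hβ : sin β ≠ 0) :
    HasDerivAt (fun b => (iotaA α b)⁻¹)
      (quat 0 (-(sin α * cos β / sin β ^ 2)) (cos α * cos β / sin β ^ 2) 0) β := by
  simp only [iotaA_inv_eq]
  refine (hasDerivAt_quat (hasDerivAt_const β 0)
    ((hasDerivAt_const β (sin α)).fun_div (hasDerivAt_sin β) hβ)
    ((hasDerivAt_const β (cos α)).fun_div (hasDerivAt_sin β) hβ).fun_neg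
    (hasDerivAt_const β 0)).congr_deriv ?_
  ext <;> simp <;> ring

theorem hasDerivAt_iotaB_inv_fst (α β : ℝ) :
    HasDerivAt (fun a => (iotaB a β)⁻¹) (quat 0 (sin α * cos β) (-(cos α * cos β)) 0) α := by
  simp only [iotaB_inv_eq]
  refine (hasDerivAt_quat (hasDerivAt_const α 0) ((hasDerivAt_cos α).mul_const (cos β)).fun_neg
    ((hasDerivAt_sin α).mul_const (cos β)).fun_neg (hasDerivAt_const α (sin β))).congr_deriv ?_
  ext <;> simp

theorem hasDerivAt_iotaB_inv_snd (α β : ℝ) :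
    HasDerivAt (fun b => (iotaB α b)⁻¹) (iota α β) β := by
  simp only [iotaB_inv_eq]
  refine (hasDerivAt_quat (hasDerivAt_const β 0) ((hasDerivAt_cos β).const_mul (cos α)).fun_neg
    ((hasDerivAt_cos β).const_mul (sin α)).fun_neg (hasDerivAt_sin β)).congr_deriv ?_
  ext <;> simp [iota_eq]

theorem iotaA_inv_mul_self (α β : ℝ) :
    (iotaA α β)⁻¹ * (iotaA α β)⁻¹ = -(((sin β ^ 2)⁻¹ : ℝ) : ℍ[ℝ]) := by
  rw [iotaA_inv_eq, Quaternion.coe_eq_quat]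
  ext <;> simp
  · linear_combination -(sin β ^ 2)⁻¹ * sin_sq_add_cos_sq α
  all_goals ring

theorem iotaB_inv_mul_self (α β : ℝ) : (iotaB α β)⁻¹ * (iotaB α β)⁻¹ = -1 := by
  rw [iotaB_inv_eq]
  ext <;> simp
  · linear_combination -(cos β ^ 2 * sin_sq_add_cos_sq α + sin_sq_add_cos_sq β)
  all_goals ring

theorem iotaA_inv_mul_iotaB_inv_add (α β : ℝ) :
    (iotaA α β)⁻¹ * (iotaB α β)⁻¹ + (iotaB α β)⁻¹ * (iotaA α β)⁻¹ = 0 := by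
  rw [iotaA_inv_eq, iotaB_inv_eq]
  ext <;> simp <;> ring

theorem DI_iotaA_inv {α β : ℝ} (hβ : sin β ≠ 0) :
    DI (fun a b => (iotaA a b)⁻¹) α β = -(iota α β * (iotaA α β)⁻¹) := by
  rw [DI, pA, pB, (hasDerivAt_iotaA_inv_fst α β).deriv, (hasDerivAt_iotaA_inv_snd α hβ).deriv,
    iotaA_inv_eq, iotaB_inv_eq, iota_eq]
  ext <;> simp <;> field_simp
  · ring
  · linear_combination -(sin α ^ 2 + cos α ^ 2) * sin_sq_add_cos_sq β

theorem DI_iotaB_inv (α β : ℝ) :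
    DI (fun a b => (iotaB a b)⁻¹) α β
      = -(iota α β * (iotaB α β)⁻¹) - ((cos β / sin β : ℝ) : ℍ[ℝ]) := by
  rw [DI, pA, pB, (hasDerivAt_iotaB_inv_fst α β).deriv, (hasDerivAt_iotaB_inv_snd α β).deriv,
    iotaA_inv_eq, iotaB_inv_eq, iota_eq, Quaternion.coe_eq_quat]
  ext <;> simp <;> field_simp
  · linear_combination cos β / sin β * (2 * sin β ^ 2 - 1) * sin_sq_add_cos_sq α
  all_goals ring

theorem DI_ofReal (v : ℝ → ℝ → ℝ) :
    DI (fun a b => (v a b : ℍ[ℝ])) = fun a b =>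
      (iotaA a b)⁻¹ * ((partialFst v a b : ℝ) : ℍ[ℝ])
        + (iotaB a b)⁻¹ * ((partialSnd v a b : ℝ) : ℍ[ℝ]) := by
  funext a b
  simp only [DI, pA, pB, Quaternion.deriv_ofReal_comp, partialFst, partialSnd]

theorem DI_DI_ofReal {v : ℝ → ℝ → ℝ} {α β : ℝ} (hβ : sin β ≠ 0)
    (hp : DifferentiableAt ℝ (fun y : ℝ × ℝ => partialFst v y.1 y.2) (α, β))
    (hq : DifferentiableAt ℝ (fun y : ℝ × ℝ => partialSnd v y.1 y.2) (α, β))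
    (hpq : partialSnd (partialFst v) α β = partialFst (partialSnd v) α β) :
    DI (DI fun a b => (v a b : ℍ[ℝ])) α β
      = -(iota α β * DI (fun a b => (v a b : ℍ[ℝ])) α β)
        - (((sin β ^ 2)⁻¹ * partialFst (partialFst v) α β : ℝ) : ℍ[ℝ])
        - ((partialSnd (partialSnd v) α β : ℝ) : ℍ[ℝ])
        - ((cos β / sin β * partialSnd v α β : ℝ) : ℍ[ℝ]) := by
  set A : ℝ → ℝ → ℍ[ℝ] := fun a b => (iotaA a b)⁻¹
  set B : ℝ → ℝ → ℍ[ℝ] := fun a b => (iotaB a b)⁻¹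
  have hA₁ : HasDerivAt (fun a => A a β) (pA A α β) α :=
    (hasDerivAt_iotaA_inv_fst α β).differentiableAt.hasDerivAt
  have hA₂ : HasDerivAt (fun b => A α b) (pB A α β) β :=
    (hasDerivAt_iotaA_inv_snd α hβ).differentiableAt.hasDerivAt
  have hB₁ : HasDerivAt (fun a => B a β) (pA B α β) α :=
    (hasDerivAt_iotaB_inv_fst α β).differentiableAt.hasDerivAt
  have hB₂ : HasDerivAt (fun b => B α b) (pB B α β) β :=
    (hasDerivAt_iotaB_inv_snd α β).differentiableAt.hasDerivAt
  have hp₁ := hp.hasFDerivAt.hasDerivAt_fst_slice.differentiableAt.hasDerivAt.quaternion_ofReal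
  have hp₂ := hp.hasFDerivAt.hasDerivAt_snd_slice.differentiableAt.hasDerivAt.quaternion_ofReal
  have hq₁ := hq.hasFDerivAt.hasDerivAt_fst_slice.differentiableAt.hasDerivAt.quaternion_ofReal
  have hq₂ := hq.hasFDerivAt.hasDerivAt_snd_slice.differentiableAt.hasDerivAt.quaternion_ofReal
  have h₁ : pA (DI fun a b => (v a b : ℍ[ℝ])) α β
      = pA A α β * ((partialFst v α β : ℝ) : ℍ[ℝ])
        + A α β * ((partialFst (partialFst v) α β : ℝ) : ℍ[ℝ])
        + (pA B α β * ((partialSnd v α β : ℝ) : ℍ[ℝ])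
          + B α β * ((partialFst (partialSnd v) α β : ℝ) : ℍ[ℝ])) := by
    rw [DI_ofReal]
    exact ((hA₁.fun_mul hp₁).fun_add (hB₁.fun_mul hq₁)).deriv
  have h₂ : pB (DI fun a b => (v a b : ℍ[ℝ])) α β
      = pB A α β * ((partialFst v α β : ℝ) : ℍ[ℝ])
        + A α β * ((partialSnd (partialFst v) α β : ℝ) : ℍ[ℝ])
        + (pB B α β * ((partialSnd v α β : ℝ) : ℍ[ℝ])
          + B α β * ((partialSnd (partialSnd v) α β : ℝ) : ℍ[ℝ])) := by
    rw [DI_ofReal]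
    exact ((hA₂.fun_mul hp₂).fun_add (hB₂.fun_mul hq₂)).deriv
  calc DI (DI fun a b => (v a b : ℍ[ℝ])) α β
      = DI A α β * ((partialFst v α β : ℝ) : ℍ[ℝ]) + DI B α β * ((partialSnd v α β : ℝ) : ℍ[ℝ])
        + A α β * A α β * ((partialFst (partialFst v) α β : ℝ) : ℍ[ℝ])
        + B α β * B α β * ((partialSnd (partialSnd v) α β : ℝ) : ℍ[ℝ])
        + (A α β * B α β + B α β * A α β) * ((partialSnd (partialFst v) α β : ℝ) : ℍ[ℝ]) := by
        rw [DI, h₁, h₂, DI, DI, hpq]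
        noncomm_ring
    _ = _ := by
        rw [DI_iotaA_inv hβ, DI_iotaB_inv, iotaA_inv_mul_self, iotaB_inv_mul_self,
          iotaA_inv_mul_iotaB_inv_add, DI_ofReal]
        push_cast
        noncomm_ring

/-- For any real-valued `C²` function `v` of `(α,β)` on a region where
`sin β ≠ 0`,
`∂²v/∂ιₗ² = -ι (∂v/∂ιₗ) - (1/sin²β) ∂²v/∂α² - ∂²v/∂β² - cot β ∂v/∂β`. -/
theorem second_angular_derivative (S : Set (ℝ × ℝ)) (hS : IsOpen S)
    (hSsin : ∀ x ∈ S, Real.sin x.2 ≠ 0)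
    (v : ℝ → ℝ → ℝ)
    (hv : ContDiffOn ℝ 2 (fun x : ℝ × ℝ => v x.1 x.2) S) :
    ∀ x ∈ S,
      DI (fun a b => DI (fun a' b' => ((v a' b' : ℝ) : ℍ[ℝ])) a b) x.1 x.2
        = -(iota x.1 x.2 * DI (fun a b => ((v a b : ℝ) : ℍ[ℝ])) x.1 x.2)
          - ((((Real.sin x.2)^2)⁻¹ * deriv (fun a => deriv (fun a' => v a' x.2) a) x.1 : ℝ) : ℍ[ℝ])
          - ((deriv (fun b => deriv (fun b' => v x.1 b') b) x.2 : ℝ) : ℍ[ℝ])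
          - ((Real.cos x.2 / Real.sin x.2 * deriv (fun b => v x.1 b) x.2 : ℝ) : ℍ[ℝ]) := by
  intro x hx
  have hvx : ContDiffAt ℝ 2 (Function.uncurry v) x := hv.contDiffAt (hS.mem_nhds hx)
  exact DI_DI_ofReal (hSsin x hx) hvx.hasFDerivAt_partialFst.differentiableAt
    hvx.hasFDerivAt_partialSnd.differentiableAt hvx.partialSnd_partialFst
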